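/- arXiv:2109.01849 — 5 statements merged into one kernel-verified Lean document; each statement's English description precedes it below -/
import Mathlib

section
/- Let h, e, i > 0 with h - e - i > 0, and let p_S = e(h-e-i)/(h(i+e)), p_I = e/h, p_C = i/(i+e). Then the expected payoff of the Sitter strategy, h - e(1 + p_C/(p_S + p_I)), equals h - e - i. -/
theorem stmt_2_general (h e i : ℝ) (hh : 0 < h) (he : 0 < e) (hi : 0 < i)
    (pS pI pC : ℝ)
    (hpS : pS = e * (h - e - i) / (h * (i + e)))
    (hpI : pI = e / h)
    (hpC : pC = i / (i + e)) :
    h - e * (1 + pC / (pS + pI)) = h - e - i := by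
  have hie : i + e ≠ 0 := by positivity
  have hsum : pS + pI = e / (i + e) := by
    rw [hpS, hpI]
    field_simp
    ring
  have hratio : pC / (pS + pI) = i / e := by
    rw [hsum, hpC, div_div_div_cancel_right₀ hie]
  rw [hratio, mul_add, mul_one, mul_div_cancel₀ i he.ne']
  ring

theorem stmt_2 (h e i : ℝ) (hh : 0 < h) (he : 0 < e) (hi : 0 < i)
    (hcond : 0 < h - e - i)
    (pS pI pC : ℝ)
    (hpS : pS = e * (h - e - i) / (h * (i + e)))
    (hpI : pI = e / h)
    (hpC : pC = i / (i + e)) :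
    h - e * (1 + pC / (pS + pI)) = h - e - i :=
  stmt_2_general h e i hh he hi pS pI pC hpS hpI hpC
end

section
/- Let h, e, i > 0 with h - e - i > 0, and let p_S = e(h-e-i)/(h(i+e)), p_I = e/h, p_C = i/(i+e). Then the expected payoff of the Cheater strategy, h·p_S/(p_S + p_I), equals h - e - i. -/
theorem stmt_3_general (h e i : ℝ) (hh : 0 < h) (he : 0 < e) (hi : 0 < i)
    (pS pI : ℝ)
    (hpS : pS = e * (h - e - i) / (h * (i + e)))
    (hpI : pI = e / h) :
    h * pS / (pS + pI) = h - e - i := by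
  have hie : i + e ≠ 0 := by positivity
  have hsum : pS + pI = e / (i + e) := by
    rw [hpS, hpI]
    field_simp
    ring
  rw [hsum, hpS]
  field_simp

theorem stmt_3 (h e i : ℝ) (hh : 0 < h) (he : 0 < e) (hi : 0 < i)
    (hcond : 0 < h - e - i)
    (pS pI pC : ℝ)
    (hpS : pS = e * (h - e - i) / (h * (i + e)))
    (hpI : pI = e / h)
    (hpC : pC = i / (i + e)) :
    h * pS / (pS + pI) = h - e - i :=
  stmt_3_general h e i hh he hi pS pI hpS hpI
end

section
/- Let h, e, i > 0 with h - e - i > 0. At the point (p_S, p_I, p_C) = (e(h-e-i)/(h(i+e)), e/h, i/(i+e)), all three expected payoffs E(S) = h - e(1 + p_C/(p_S+p_I)), E(I) = h - e - i, and E(C) = h·p_S/(p_S+p_I) are equal, i.e., this point is a Bayesian Nash equilibrium. -/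
/-! Everything hinges on `p_S + p_I = e / (i + e)`: then `p_C / (p_S + p_I) = i / e`, so
`E(S) = h - e - i`, and `h p_S / (p_S + p_I) = h - e - i` by direct cancellation. -/

lemma equilibrium_pS_add_pI {h e i : ℝ} (hh : h ≠ 0) (hie : i + e ≠ 0) :
    e * (h - e - i) / (h * (i + e)) + e / h = e / (i + e) := by
  field_simp
  ring

theorem stmt_4_general (h e i : ℝ) (hh : 0 < h) (he : 0 < e) (hi : 0 < i)
    (pS pI pC : ℝ)
    (hpS : pS = e * (h - e - i) / (h * (i + e)))
    (hpI : pI = e / h)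
    (hpC : pC = i / (i + e)) :
    h - e * (1 + pC / (pS + pI)) = h - e - i ∧
    h * pS / (pS + pI) = h - e - i := by
  have hie : i + e ≠ 0 := by positivity
  have hsum : pS + pI = e / (i + e) := by
    rw [hpS, hpI, equilibrium_pS_add_pI hh.ne' hie]
  constructor
  · rw [hsum, hpC]
    field_simp
    ring
  · rw [hsum, hpS]
    field_simp

theorem stmt_4 (h e i : ℝ) (hh : 0 < h) (he : 0 < e) (hi : 0 < i)
    (hcond : 0 < h - e - i)
    (pS pI pC : ℝ)
    (hpS : pS = e * (h - e - i) / (h * (i + e)))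
    (hpI : pI = e / h)
    (hpC : pC = i / (i + e)) :
    h - e * (1 + pC / (pS + pI)) = h - e - i ∧
    h * pS / (pS + pI) = h - e - i :=
  stmt_4_general h e i hh he hi pS pI pC hpS hpI hpC
end

section
/- Let h, e, i > 0 with h - e - i > 0. Suppose p_S, p_I, p_C > 0 with p_S + p_I + p_C = 1, and suppose h - e(1 + p_C/(p_S+p_I)) = h - e - i = h·p_S/(p_S+p_I). Then (p_S, p_I, p_C) = (e(h-e-i)/(h(i+e)), e/h, i/(i+e)). That is, the interior Bayesian Nash equilibrium is unique. -/
/-! Equating the payoffs of Sitters and Identifiers relates the Cheaters' share `p_C` to the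
share `t = p_S + p_I` of the other two types by `e p_C = i t`; together with `t + p_C = 1` this
fixes `t = e/(i+e)` and `p_C = i/(i+e)`. Equating the payoffs of Identifiers and Cheaters then
gives `p_S = (h-e-i) t / h`, and `p_I = t - p_S`. -/

lemma mul_eq_mul_of_sitter_payoff_eq {h e i t c : ℝ} (ht : t ≠ 0)
    (hSI : h - e * (1 + c / t) = h - e - i) : e * c = i * t := by
  field_simp at hSI
  linarith

lemma eq_div_of_mul_eq_mul_of_add_eq_one {e i t c : ℝ} (hie : i + e ≠ 0)
    (hmul : e * c = i * t) (hsum : t + c = 1) : t = e / (i + e) ∧ c = i / (i + e) := by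
  constructor
  · field_simp
    linear_combination -hmul + e * hsum
  · field_simp
    linear_combination hmul + i * hsum

lemma eq_mul_div_of_identifier_payoff_eq {h s t k : ℝ} (hh : h ≠ 0) (ht : t ≠ 0)
    (hIC : k = h * s / t) : s = k * t / h := by
  rw [hIC]
  field_simp

theorem stmt_5_general (h e i : ℝ) (hh : 0 < h) (he : 0 < e) (hi : 0 < i)
    (pS pI pC : ℝ) (hpS : 0 < pS) (hpI : 0 < pI)
    (hsum : pS + pI + pC = 1)
    (h1 : h - e * (1 + pC / (pS + pI)) = h - e - i)
    (h2 : h - e - i = h * pS / (pS + pI)) :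
    pS = e * (h - e - i) / (h * (i + e)) ∧ pI = e / h ∧ pC = i / (i + e) := by
  have hT : pS + pI ≠ 0 := by positivity
  have hie : i + e ≠ 0 := by positivity
  obtain ⟨hT_eq, hpC_eq⟩ := eq_div_of_mul_eq_mul_of_add_eq_one hie
    (mul_eq_mul_of_sitter_payoff_eq hT h1) hsum
  have hpS_eq : pS = e * (h - e - i) / (h * (i + e)) := by
    rw [eq_mul_div_of_identifier_payoff_eq hh.ne' hT h2, hT_eq]
    field_simp
  refine ⟨hpS_eq, ?_, hpC_eq⟩
  rw [eq_sub_of_add_eq' hT_eq, hpS_eq]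
  field_simp
  ring

theorem stmt_5 (h e i : ℝ) (hh : 0 < h) (he : 0 < e) (hi : 0 < i)
    (hcond : 0 < h - e - i)
    (pS pI pC : ℝ) (hpS : 0 < pS) (hpI : 0 < pI) (hpC : 0 < pC)
    (hsum : pS + pI + pC = 1)
    (h1 : h - e * (1 + pC / (pS + pI)) = h - e - i)
    (h2 : h - e - i = h * pS / (pS + pI)) :
    pS = e * (h - e - i) / (h * (i + e)) ∧ pI = e / h ∧ pC = i / (i + e) :=
  stmt_5_general h e i hh he hi pS pI pC hpS hpI hsum h1 h2
end

section
/- Let h, e, i > 0 with h - e - i > 0, and let (p_S*, p_I*, p_C*) = (e(h-e-i)/(h(i+e)), e/h, i/(i+e)). Then the replicator dynamics vector field vanishes at this point: for each strategy X ∈ {S, I, C}, p_X*·(E(X) - W) = 0, where W is the population average payoff. -/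
/-! At the given point the three strategies earn the same payoff `h - e - i`, and the
shares sum to `1`; hence the mean payoff is also `h - e - i` and every component of the
replicator field vanishes. The only computation is `p_S + p_I = e / (i + e)`, which turns
both density-dependent payoffs `E(S)` and `E(C)` into `h - e - i`. -/

theorem replicator_eq_zero_of_payoffs_eq {p₁ p₂ p₃ E₁ E₂ E₃ W c : ℝ}
    (hp : p₁ + p₂ + p₃ = 1) (h₁ : E₁ = c) (h₂ : E₂ = c) (h₃ : E₃ = c)
    (hW : W = p₁ * E₁ + p₂ * E₂ + p₃ * E₃) :
    p₁ * (E₁ - W) = 0 ∧ p₂ * (E₂ - W) = 0 ∧ p₃ * (E₃ - W) = 0 := by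
  have hWc : W = c := by rw [hW, h₁, h₂, h₃]; linear_combination c * hp
  simp [h₁, h₂, h₃, hWc]

section Equilibrium

variable {h e i : ℝ}

theorem share_S_add_share_I (hh : h ≠ 0) (hie : i + e ≠ 0) :
    e * (h - e - i) / (h * (i + e)) + e / h = e / (i + e) := by
  field_simp
  ring

theorem payoff_S_at_equilibrium (he : e ≠ 0) (hie : i + e ≠ 0) :
    h - e * (1 + i / (i + e) / (e / (i + e))) = h - e - i := by
  field_simp
  ring

theorem payoff_C_at_equilibrium (hh : h ≠ 0) (he : e ≠ 0) (hie : i + e ≠ 0) :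
    h * (e * (h - e - i) / (h * (i + e))) / (e / (i + e)) = h - e - i := by
  field_simp

end Equilibrium

theorem stmt_12_general (h e i : ℝ) (hh : 0 < h) (he : 0 < e) (hi : 0 < i)
    (pS pI pC : ℝ)
    (hpS : pS = e * (h - e - i) / (h * (i + e)))
    (hpI : pI = e / h)
    (hpC : pC = i / (i + e))
    (ES EI EC W : ℝ)
    (hES : ES = h - e * (1 + pC / (pS + pI)))
    (hEI : EI = h - e - i)
    (hEC : EC = h * pS / (pS + pI))
    (hW : W = pS * ES + pI * EI + pC * EC) :
    pS * (ES - W) = 0 ∧ pI * (EI - W) = 0 ∧ pC * (EC - W) = 0 := by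
  have hie : i + e ≠ 0 := by positivity
  have hSI : pS + pI = e / (i + e) := by rw [hpS, hpI]; exact share_S_add_share_I hh.ne' hie
  have hsum : pS + pI + pC = 1 := by rw [hSI, hpC, ← add_div, add_comm, div_self hie]
  refine replicator_eq_zero_of_payoffs_eq hsum ?_ hEI ?_ hW
  · rw [hES, hSI, hpC]; exact payoff_S_at_equilibrium he.ne' hie
  · rw [hEC, hSI, hpS]; exact payoff_C_at_equilibrium hh.ne' he.ne' hie

theorem stmt_12 (h e i : ℝ) (hh : 0 < h) (he : 0 < e) (hi : 0 < i)
    (hcond : 0 < h - e - i)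
    (pS pI pC : ℝ)
    (hpS : pS = e * (h - e - i) / (h * (i + e)))
    (hpI : pI = e / h)
    (hpC : pC = i / (i + e))
    (ES EI EC W : ℝ)
    (hES : ES = h - e * (1 + pC / (pS + pI)))
    (hEI : EI = h - e - i)
    (hEC : EC = h * pS / (pS + pI))
    (hW : W = pS * ES + pI * EI + pC * EC) :
    pS * (ES - W) = 0 ∧ pI * (EI - W) = 0 ∧ pC * (EC - W) = 0 :=
  stmt_12_general h e i hh he hi pS pI pC hpS hpI hpC ES EI EC W hES hEI hEC hW
end
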